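/- Let 0<q<1, let u be a nonzero complex number, let t be a positive rational number, and let λ ∈ [0,1) be such that λ = n₀ t − ⌊n₀ t⌋ for some positive integer n₀. Then there exists N such that for every integer n ≥ N with n t − ⌊n t⌋ = λ, writing m = ⌊n t⌋, there exists a complex number r satisfying (q;q)_∞ · q^{⌊m/2⌋ (n t − ⌊m/2⌋)} · A_q(q^{−n t} u) = (−u)^{⌊m/2⌋} · ( θ(−u^{−1} q^{χ(m)+λ}; q²) + r ) and |r| ≤ (3 (−q³; q)_∞ θ(|u|^{−1}; q) / (1 − q)) · ( q^{m/4} + q^{m²/16} / |u|^{⌊m/4⌋+1} ). -/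

import Mathlib

/-- The finite q-Pochhammer symbol `(a; q)_k = ∏_{j=0}^{k-1} (1 - a q^j)`. -/
noncomputable def qPochK (a q : ℝ) (k : ℕ) : ℝ := ∏ j ∈ Finset.range k, (1 - a * q ^ j)

/-- The infinite q-Pochhammer symbol `(a; q)_∞ = ∏_{k=0}^∞ (1 - a q^k)`. -/
noncomputable def qPochInf (a q : ℝ) : ℝ := ∏' k : ℕ, (1 - a * q ^ k)

/-- Ramanujan's entire function `A_q(z) = ∑_{k=0}^∞ q^{k²} (-z)^k / (q;q)_k`. -/
noncomputable def Aq (q : ℝ) (z : ℂ) : ℂ :=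
  ∑' k : ℕ, ((q : ℂ) ^ (k ^ 2) * (-z) ^ k / ((qPochK q q k : ℝ) : ℂ))

/-- The theta function `θ(z; p) = ∑_{k=-∞}^∞ p^{k²/2} z^k` for complex `z ≠ 0`, `0 < p < 1`. -/
noncomputable def thetaC (z : ℂ) (p : ℝ) : ℂ :=
  ∑' k : ℤ, ((p ^ (((k : ℝ) ^ 2) / 2) : ℝ) : ℂ) * z ^ k

/-- The real theta function `θ(x; p) = ∑_{k=-∞}^∞ p^{k²/2} x^k` for real `x > 0`. -/
noncomputable def thetaR (x p : ℝ) : ℝ := ∑' k : ℤ, p ^ (((k : ℝ) ^ 2) / 2) * x ^ k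

/-- The principal character modulo 2: `χ(m) = 1` if `m` is odd, `0` otherwise. -/
def chi (m : ℤ) : ℤ := m % 2

/-!
Put `x = nt = 2p + c` with `p = ⌊m/2⌋` and `c = χ(m) + λ ∈ [0, 2)`. Expanding `A_q` termwise and
splitting `(q;q)_∞ = (q;q)_k (q^{k+1};q)_∞` gives, with `j = k - p`,
`(q;q)_∞ q^{p(x-p)} A_q(q^{-x}u) = (-u)^p ∑_{k ≥ 0} q^{j²-cj} (-u)^j (q^{k+1};q)_∞`,
while `θ(-u⁻¹q^c; q²) = ∑_{j ∈ ℤ} q^{j²-cj} (-u)^j`. The remainder thus consists of the corrections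
`(q^{k+1};q)_∞ - 1 = O(q^{k+1})`, which carry a factor `q^p`, and of the terms with `j < -p`, which
carry a factor `q^{(⌊m/4⌋+1)²}`. Both are compared with `θ(|u|⁻¹; q)` through
`q^{j²/2} |u|^j ≤ θ(|u|⁻¹; q)`; the leftover Gaussian sum `∑ q^{j²/4}` is absorbed into the
constant once `m` is large.
-/

open Filter Topology

section RealProducts

variable {ι : Type*} {f : ι → ℝ}

lemma tprod_le_one_of_nonneg (h0 : ∀ i, 0 ≤ f i) (h1 : ∀ i, f i ≤ 1) : ∏' i, f i ≤ 1 := by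
  by_cases hf : Multipliable f
  · exact le_of_tendsto' hf.hasProd fun s ↦ Finset.prod_le_one (fun i _ ↦ h0 i) fun i _ ↦ h1 i
  · rw [tprod_eq_one_of_not_multipliable hf]

lemma one_le_tprod_of_one_le (h : ∀ i, 1 ≤ f i) : 1 ≤ ∏' i, f i := by
  by_cases hf : Multipliable f
  · exact ge_of_tendsto' hf.hasProd fun s ↦ Finset.one_le_prod fun i _ ↦ h i
  · rw [tprod_eq_one_of_not_multipliable hf]

lemma Finset.one_sub_sum_le_prod_one_sub (s : Finset ι) (h0 : ∀ i, 0 ≤ f i) (h1 : ∀ i, f i ≤ 1) :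
    1 - ∑ i ∈ s, f i ≤ ∏ i ∈ s, (1 - f i) := by
  classical
  induction s using Finset.induction_on with
  | empty => simp
  | insert x s hx ih =>
    rw [Finset.sum_insert hx, Finset.prod_insert hx]
    have hsum : 0 ≤ ∑ i ∈ s, f i := Finset.sum_nonneg fun i _ ↦ h0 i
    nlinarith [h0 x, h1 x, mul_le_mul_of_nonneg_left ih (sub_nonneg.2 (h1 x))]

lemma one_sub_tsum_le_tprod_one_sub (h0 : ∀ i, 0 ≤ f i) (h1 : ∀ i, f i ≤ 1) (hf : Summable f) :
    1 - ∑' i, f i ≤ ∏' i, (1 - f i) := by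
  have hmul : Multipliable fun i ↦ 1 - f i := by
    simpa [sub_eq_add_neg] using Real.multipliable_one_add_of_summable hf.neg
  exact le_of_tendsto_of_tendsto' (hf.hasSum.const_sub 1) hmul.hasProd
    fun s ↦ s.one_sub_sum_le_prod_one_sub h0 h1

end RealProducts

lemma norm_tsum_le_mul_tsum_of_injective {ι κ E : Type*} [SeminormedAddCommGroup E] {a : κ → E}
    {f : ι → ℝ} (hf : Summable f) (hf0 : ∀ i, 0 ≤ f i) {e : κ → ι} (he : e.Injective) {C : ℝ}
    (hC : 0 ≤ C) (h : ∀ k, ‖a k‖ ≤ C * f (e k)) : ‖∑' k, a k‖ ≤ C * ∑' i, f i := by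
  refine (tsum_of_norm_bounded ((hf.comp_injective he).mul_left C).hasSum h).trans ?_
  rw [tsum_mul_left]
  exact mul_le_mul_of_nonneg_left (tsum_comp_le_tsum_of_inj hf hf0 he) hC

section QPochhammer

variable {a q : ℝ}

lemma hasProd_qPochInf (a : ℝ) (hq0 : 0 ≤ q) (hq1 : q < 1) :
    HasProd (fun i : ℕ ↦ 1 - a * q ^ i) (qPochInf a q) := by
  have h := Real.multipliable_one_add_of_summable
    ((summable_geometric_of_lt_one hq0 hq1).mul_left a).neg
  simp only [← sub_eq_add_neg] at h
  exact h.hasProd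

lemma qPochInf_eq_qPochK_mul (a : ℝ) (hq0 : 0 ≤ q) (hq1 : q < 1) (k : ℕ) :
    qPochInf a q = qPochK a q k * qPochInf (a * q ^ k) q := by
  have htail : HasProd (fun i : ℕ ↦ 1 - a * q ^ (i + k)) (qPochInf (a * q ^ k) q) := by
    simpa only [pow_add, mul_comm, mul_assoc] using hasProd_qPochInf (a * q ^ k) hq0 hq1
  exact (hasProd_qPochInf a hq0 hq1).unique htail.prod_range_mul

lemma qPochK_pos (ha0 : 0 ≤ a) (ha1 : a < 1) (hq0 : 0 ≤ q) (hq1 : q ≤ 1) (k : ℕ) :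
    0 < qPochK a q k :=
  Finset.prod_pos fun j _ ↦ by nlinarith [pow_le_one₀ hq0 hq1 (n := j)]

variable (ha0 : 0 ≤ a) (ha1 : a ≤ 1) (hq0 : 0 ≤ q)
include ha0 ha1 hq0

lemma one_sub_mul_pow_mem_Icc (hq1 : q ≤ 1) (i : ℕ) : 1 - a * q ^ i ∈ Set.Icc 0 1 := by
  have := pow_le_one₀ hq0 hq1 (n := i)
  constructor <;> nlinarith [pow_nonneg hq0 i]

lemma qPochInf_nonneg (hq1 : q ≤ 1) : 0 ≤ qPochInf a q :=
  tprod_nonneg fun i ↦ (one_sub_mul_pow_mem_Icc ha0 ha1 hq0 hq1 i).1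

lemma qPochInf_le_one (hq1 : q ≤ 1) : qPochInf a q ≤ 1 :=
  tprod_le_one_of_nonneg (fun i ↦ (one_sub_mul_pow_mem_Icc ha0 ha1 hq0 hq1 i).1)
    fun i ↦ (one_sub_mul_pow_mem_Icc ha0 ha1 hq0 hq1 i).2

lemma one_sub_qPochInf_le (hq1 : q < 1) : 1 - qPochInf a q ≤ a / (1 - q) := by
  have hmem := one_sub_mul_pow_mem_Icc ha0 ha1 hq0 hq1.le
  have h := one_sub_tsum_le_tprod_one_sub (f := fun i : ℕ ↦ a * q ^ i)
    (fun i ↦ by linarith [(hmem i).2]) (fun i ↦ by linarith [(hmem i).1])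
    ((summable_geometric_of_lt_one hq0 hq1).mul_left a)
  rw [tsum_mul_left, tsum_geometric_of_lt_one hq0 hq1] at h
  rw [qPochInf, div_eq_mul_inv]
  linarith

end QPochhammer

lemma one_le_qPochInf_neg {a q : ℝ} (ha : 0 ≤ a) (hq0 : 0 ≤ q) : 1 ≤ qPochInf (-a) q :=
  one_le_tprod_of_one_le fun i ↦ by nlinarith [pow_nonneg hq0 i]

section GaussianSums

variable {q α : ℝ}

lemma summable_rpow_mul_sq_mul_pow (hq0 : 0 < q) (hq1 : q < 1) (hα : 0 < α) (b : ℝ) :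
    Summable fun n : ℕ ↦ q ^ (α * (n : ℝ) ^ 2) * b ^ n := by
  have hlim : Tendsto (fun n : ℕ ↦ q ^ (α * n) * |b|) atTop (𝓝 0) := by
    have := (tendsto_rpow_atTop_of_base_lt_one q (by linarith) hq1).comp
      (tendsto_natCast_atTop_atTop.const_mul_atTop hα)
    simpa using this.mul_const |b|
  refine Summable.of_norm_bounded_eventually_nat summable_geometric_two ?_
  filter_upwards [hlim.eventually (gt_mem_nhds (by norm_num : (0 : ℝ) < 1 / 2))] with n hn
  have hsplit : q ^ (α * (n : ℝ) ^ 2) = (q ^ (α * n)) ^ n := by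
    rw [← Real.rpow_natCast (q ^ (α * n)) n, ← Real.rpow_mul hq0.le]; ring_nf
  rw [norm_mul, hsplit, norm_pow, norm_pow, ← mul_pow, Real.norm_eq_abs,
    abs_of_pos (Real.rpow_pos_of_pos hq0 _), Real.norm_eq_abs]
  exact pow_le_pow_left₀ (by positivity) hn.le n

lemma summable_rpow_mul_sq_mul_zpow (hq0 : 0 < q) (hq1 : q < 1) (hα : 0 < α) (b : ℝ) :
    Summable fun j : ℤ ↦ q ^ (α * (j : ℝ) ^ 2) * b ^ j := by
  refine Summable.of_nat_of_neg ?_ ?_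
  · simpa using summable_rpow_mul_sq_mul_pow hq0 hq1 hα b
  · simpa using summable_rpow_mul_sq_mul_pow hq0 hq1 hα b⁻¹

lemma summable_rpow_sq_div {d : ℝ} (hq0 : 0 < q) (hq1 : q < 1) (hd : 0 < d) :
    Summable fun j : ℤ ↦ q ^ ((j : ℝ) ^ 2 / d) := by
  simpa [div_eq_inv_mul] using summable_rpow_mul_sq_mul_zpow hq0 hq1 (inv_pos.2 hd) 1

end GaussianSums

section Theta

variable {q : ℝ}

lemma summable_thetaR_term (hq0 : 0 < q) (hq1 : q < 1) (x : ℝ) :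
    Summable fun k : ℤ ↦ q ^ ((k : ℝ) ^ 2 / 2) * x ^ k := by
  simpa only [div_eq_inv_mul, one_div] using
    summable_rpow_mul_sq_mul_zpow hq0 hq1 (inv_pos.2 two_pos) x

lemma rpow_sq_div_two_mul_zpow_le_thetaR (hq0 : 0 < q) (hq1 : q < 1) {v : ℝ} (hv : 0 < v)
    (j : ℤ) : q ^ ((j : ℝ) ^ 2 / 2) * v ^ j ≤ thetaR v⁻¹ q := by
  have h := (summable_thetaR_term hq0 hq1 v⁻¹).le_tsum (-j) fun k _ ↦ by positivity
  simpa [thetaR, inv_zpow', neg_sq] using h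

lemma thetaR_nonneg {x : ℝ} (hx : 0 ≤ x) (hq0 : 0 ≤ q) : 0 ≤ thetaR x q :=
  tsum_nonneg fun k ↦ mul_nonneg (by positivity) (zpow_nonneg hx k)

/-- The `j`-th term of `θ(-u⁻¹ q^c; q²)` after the substitution `k = -j`. -/
noncomputable def thetaTerm (q c : ℝ) (u : ℂ) (j : ℤ) : ℂ :=
  ((q ^ ((j : ℝ) ^ 2 - c * j) : ℝ) : ℂ) * (-u) ^ j

variable {c : ℝ} {u : ℂ}

lemma norm_thetaTerm (hq0 : 0 < q) (j : ℤ) :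
    ‖thetaTerm q c u j‖ = q ^ ((j : ℝ) ^ 2 - c * j) * ‖u‖ ^ j := by
  rw [thetaTerm, norm_mul, Complex.norm_real, Real.norm_of_nonneg (by positivity), norm_zpow,
    norm_neg]

lemma summable_norm_thetaTerm (hq0 : 0 < q) (hq1 : q < 1) :
    Summable fun j ↦ ‖thetaTerm q c u j‖ := by
  refine (summable_rpow_mul_sq_mul_zpow hq0 hq1 one_pos (q ^ (-c) * ‖u‖)).congr fun j ↦ ?_
  rw [norm_thetaTerm hq0, mul_zpow, ← mul_assoc, ← Real.rpow_intCast (q ^ (-c)),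
    ← Real.rpow_mul hq0.le, ← Real.rpow_add hq0]
  ring_nf

lemma thetaC_eq_tsum_thetaTerm (hq0 : 0 < q) :
    thetaC (-(u⁻¹ * ((q ^ c : ℝ) : ℂ))) (q ^ 2) = ∑' j, thetaTerm q c u j := by
  rw [thetaC, ← (Equiv.neg ℤ).tsum_eq]
  refine tsum_congr fun k ↦ ?_
  have hz : (-(u⁻¹ * ((q ^ c : ℝ) : ℂ)))⁻¹ = ((q ^ (-c) : ℝ) : ℂ) * (-u) := by
    rw [Real.rpow_neg hq0.le, Complex.ofReal_inv]
    field_simp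
  have hq2 : (q ^ 2) ^ (((-k : ℤ) : ℝ) ^ 2 / 2) = q ^ ((k : ℝ) ^ 2) := by
    rw [← Real.rpow_natCast, ← Real.rpow_mul hq0.le]; push_cast; ring_nf
  rw [thetaTerm, Equiv.neg_apply, zpow_neg, ← inv_zpow, hz, mul_zpow, ← Complex.ofReal_zpow,
    ← Real.rpow_intCast, ← Real.rpow_mul hq0.le, hq2, ← mul_assoc, ← Complex.ofReal_mul,
    ← Real.rpow_add hq0]
  ring_nf

end Theta

section Expansion

variable {q : ℝ} {u : ℂ}

lemma qPochInf_mul_Aq_term (hq0 : 0 < q) (hq1 : q < 1) (hu : u ≠ 0) (x : ℝ) (p : ℤ) (k : ℕ) :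
    ((qPochInf q q : ℝ) : ℂ) * ((q ^ ((p : ℝ) * (x - p)) : ℝ) : ℂ)
        * ((q : ℂ) ^ (k ^ 2) * (-(((q ^ (-x) : ℝ) : ℂ) * u)) ^ k / ((qPochK q q k : ℝ) : ℂ))
      = (-u) ^ p * (thetaTerm q (x - 2 * p) u (k - p) * qPochInf (q ^ (k + 1)) q) := by
  have hK := qPochK_pos hq0.le hq1 hq0.le hq1.le k
  have hreal : qPochInf q q * (q ^ ((p : ℝ) * (x - p)) * (q ^ (k ^ 2) * (q ^ (-x)) ^ k))
      / qPochK q q k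
      = q ^ ((((k : ℤ) - p : ℤ) : ℝ) ^ 2 - (x - 2 * p) * (((k : ℤ) - p : ℤ) : ℝ))
        * qPochInf (q ^ (k + 1)) q := by
    have hexp : q ^ ((p : ℝ) * (x - p)) * (q ^ (k ^ 2) * (q ^ (-x)) ^ k)
        = q ^ ((((k : ℤ) - p : ℤ) : ℝ) ^ 2 - (x - 2 * p) * (((k : ℤ) - p : ℤ) : ℝ)) := by
      rw [← Real.rpow_natCast (q ^ (-x)), ← Real.rpow_mul hq0.le, ← Real.rpow_natCast q,
        ← Real.rpow_add hq0, ← Real.rpow_add hq0]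
      push_cast
      ring_nf
    rw [qPochInf_eq_qPochK_mul q hq0.le hq1 k, ← pow_succ', hexp]
    field_simp
  have hsplit : (-u) ^ k = (-u) ^ p * (-u) ^ ((k : ℤ) - p) := by
    rw [← zpow_natCast, ← zpow_add₀ (neg_ne_zero.2 hu), add_sub_cancel]
  calc _ = ((qPochInf q q * (q ^ ((p : ℝ) * (x - p)) * (q ^ (k ^ 2) * (q ^ (-x)) ^ k))
          / qPochK q q k : ℝ) : ℂ) * (-u) ^ k := by
        push_cast
        ring
    _ = _ := by
        rw [hreal, hsplit, thetaTerm]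
        push_cast
        ring

lemma qPochInf_mul_Aq_eq_tsum (hq0 : 0 < q) (hq1 : q < 1) (hu : u ≠ 0) (x : ℝ) (p : ℤ) :
    ((qPochInf q q : ℝ) : ℂ) * ((q ^ ((p : ℝ) * (x - p)) : ℝ) : ℂ)
        * Aq q (((q ^ (-x) : ℝ) : ℂ) * u)
      = (-u) ^ p * ∑' k : ℕ, thetaTerm q (x - 2 * p) u (k - p) * qPochInf (q ^ (k + 1)) q := by
  rw [Aq, ← tsum_mul_left, ← tsum_mul_left]
  exact tsum_congr (qPochInf_mul_Aq_term hq0 hq1 hu x p)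

end Expansion

section Remainder

variable {q c : ℝ} {u : ℂ}

lemma summable_thetaTerm (hq0 : 0 < q) (hq1 : q < 1) : Summable (thetaTerm q c u) :=
  (summable_norm_thetaTerm hq0 hq1).of_norm

lemma norm_qPochInf_pow_sub_one_le (hq0 : 0 < q) (hq1 : q < 1) (k : ℕ) :
    ‖((qPochInf (q ^ (k + 1)) q : ℝ) : ℂ) - 1‖ ≤ 1 - qPochInf (q ^ (k + 1)) q := by
  have h1 : q ^ (k + 1) ≤ 1 := pow_le_one₀ hq0.le hq1.le
  rw [← Complex.ofReal_one, ← Complex.ofReal_sub, Complex.norm_real, Real.norm_eq_abs,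
    abs_sub_comm, abs_of_nonneg (sub_nonneg.2 (qPochInf_le_one (by positivity) h1 hq0.le hq1.le))]

lemma tsum_thetaTerm_eq (hq0 : 0 < q) (hq1 : q < 1) (p : ℤ) :
    ∑' j, thetaTerm q c u j
      = ∑' k : ℕ, thetaTerm q c u (k - p) + ∑' k : ℕ, thetaTerm q c u (-(k + 1) - p) := by
  have hG := summable_thetaTerm (c := c) (u := u) hq0 hq1
  rw [← (Equiv.subRight p).tsum_eq]
  exact tsum_of_nat_of_neg_add_one
    (hG.comp_injective fun a b h ↦ by simpa using h)
    (hG.comp_injective fun a b h ↦ by simpa using h)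

lemma qPochInf_mul_Aq_eq_thetaC_add (hq0 : 0 < q) (hq1 : q < 1) (hu : u ≠ 0) (x : ℝ) (p : ℤ) :
    ((qPochInf q q : ℝ) : ℂ) * ((q ^ ((p : ℝ) * (x - p)) : ℝ) : ℂ)
        * Aq q (((q ^ (-x) : ℝ) : ℂ) * u)
      = (-u) ^ p * (thetaC (-(u⁻¹ * ((q ^ (x - 2 * p) : ℝ) : ℂ))) (q ^ 2)
          + (∑' k : ℕ, thetaTerm q (x - 2 * p) u (k - p) * (qPochInf (q ^ (k + 1)) q - 1)
            - ∑' k : ℕ, thetaTerm q (x - 2 * p) u (-(k + 1) - p))) := by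
  set c := x - 2 * p
  have hG : Summable fun k : ℕ ↦ thetaTerm q c u (k - p) :=
    (summable_thetaTerm hq0 hq1).comp_injective fun a b h ↦ by simpa using h
  have hGT : Summable fun k : ℕ ↦ thetaTerm q c u (k - p) * (qPochInf (q ^ (k + 1)) q - 1) := by
    refine hG.norm.of_norm_bounded fun k ↦ ?_
    rw [norm_mul]
    refine mul_le_of_le_one_right (norm_nonneg _) ?_
    refine (norm_qPochInf_pow_sub_one_le hq0 hq1 k).trans ?_
    linarith [qPochInf_nonneg (pow_nonneg hq0.le (k + 1)) (pow_le_one₀ hq0.le hq1.le) hq0.le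
      hq1.le]
  rw [qPochInf_mul_Aq_eq_tsum hq0 hq1 hu, thetaC_eq_tsum_thetaTerm hq0, tsum_thetaTerm_eq hq0 hq1 p]
  have hsplit : ∑' k : ℕ, thetaTerm q c u (k - p) * qPochInf (q ^ (k + 1)) q
      = ∑' k : ℕ, thetaTerm q c u (k - p)
        + ∑' k : ℕ, thetaTerm q c u (k - p) * (qPochInf (q ^ (k + 1)) q - 1) := by
    rw [← hG.tsum_add hGT]
    exact tsum_congr fun k ↦ by ring
  rw [hsplit]
  ring

end Remainder

section RemainderBounds

variable {q c : ℝ} {u : ℂ} (hq0 : 0 < q) (hq1 : q < 1) (hu : u ≠ 0)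
include hq0 hq1 hu

lemma norm_thetaTerm_mul_rpow_le (hc0 : 0 ≤ c) (hc2 : c ≤ 2) (j : ℤ) :
    ‖thetaTerm q c u j‖ * q ^ ((j : ℝ) + 1) ≤ thetaR ‖u‖⁻¹ q * q ^ ((j : ℝ) ^ 2 / 4) := by
  have hexp : (j : ℝ) ^ 2 / 2 + (j : ℝ) ^ 2 / 4 ≤ ((j : ℝ) ^ 2 - c * j) + (j + 1) := by
    nlinarith [mul_nonneg (sub_nonneg.2 hc2) (sq_nonneg ((j : ℝ) / 2 + 1)),
      mul_nonneg hc0 (sq_nonneg ((j : ℝ) / 2 - 1))]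
  have hv : 0 < ‖u‖ := norm_pos_iff.2 hu
  calc ‖thetaTerm q c u j‖ * q ^ ((j : ℝ) + 1)
      = q ^ (((j : ℝ) ^ 2 - c * j) + (j + 1)) * ‖u‖ ^ j := by
        rw [norm_thetaTerm hq0, Real.rpow_add hq0 ((j : ℝ) ^ 2 - c * j)]; ring
    _ ≤ q ^ ((j : ℝ) ^ 2 / 2 + (j : ℝ) ^ 2 / 4) * ‖u‖ ^ j := by
        gcongr ?_ * _
        exact Real.rpow_le_rpow_of_exponent_ge hq0 hq1.le hexp
    _ = (q ^ ((j : ℝ) ^ 2 / 2) * ‖u‖ ^ j) * q ^ ((j : ℝ) ^ 2 / 4) := by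
        rw [Real.rpow_add hq0]; ring
    _ ≤ thetaR ‖u‖⁻¹ q * q ^ ((j : ℝ) ^ 2 / 4) := by
        gcongr
        exact rpow_sq_div_two_mul_zpow_le_thetaR hq0 hq1 hv j

lemma norm_thetaTerm_le_of_le_neg (hc0 : 0 ≤ c) {s j : ℤ} (hs : 0 ≤ s) (hj : j ≤ -s) :
    ‖thetaTerm q c u j‖
      ≤ thetaR ‖u‖⁻¹ q * q ^ ((s : ℝ) ^ 2) / ‖u‖ ^ s * q ^ (((j + s : ℤ) : ℝ) ^ 2 / 4) := by
  have hv : 0 < ‖u‖ := norm_pos_iff.2 hu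
  have hsr : (0 : ℝ) ≤ s := by exact_mod_cast hs
  have hjr : (j : ℝ) ≤ -s := by exact_mod_cast hj
  have hexp : (s : ℝ) ^ 2 + ((j + s : ℤ) : ℝ) ^ 2 / 2 + ((j + s : ℤ) : ℝ) ^ 2 / 4
      ≤ (j : ℝ) ^ 2 - c * j := by
    push_cast
    nlinarith [mul_nonneg hsr (by linarith : (0 : ℝ) ≤ -(j + s)), mul_nonneg hc0 hsr,
      sq_nonneg ((j : ℝ) + s)]
  calc ‖thetaTerm q c u j‖ = q ^ ((j : ℝ) ^ 2 - c * j) * ‖u‖ ^ j := norm_thetaTerm hq0 j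
    _ ≤ q ^ ((s : ℝ) ^ 2 + ((j + s : ℤ) : ℝ) ^ 2 / 2 + ((j + s : ℤ) : ℝ) ^ 2 / 4) * ‖u‖ ^ j := by
        gcongr ?_ * _
        exact Real.rpow_le_rpow_of_exponent_ge hq0 hq1.le hexp
    _ = q ^ ((s : ℝ) ^ 2) / ‖u‖ ^ s * q ^ (((j + s : ℤ) : ℝ) ^ 2 / 4)
          * (q ^ (((j + s : ℤ) : ℝ) ^ 2 / 2) * ‖u‖ ^ (j + s)) := by
        rw [Real.rpow_add hq0, Real.rpow_add hq0, zpow_add₀ hv.ne']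
        field_simp
    _ ≤ q ^ ((s : ℝ) ^ 2) / ‖u‖ ^ s * q ^ (((j + s : ℤ) : ℝ) ^ 2 / 4) * thetaR ‖u‖⁻¹ q := by
        gcongr
        exact rpow_sq_div_two_mul_zpow_le_thetaR hq0 hq1 hv (j + s)
    _ = _ := by ring

lemma norm_tsum_thetaTerm_mul_sub_one_le (hc0 : 0 ≤ c) (hc2 : c ≤ 2) (p : ℤ) :
    ‖∑' k : ℕ, thetaTerm q c u (k - p) * (((qPochInf (q ^ (k + 1)) q : ℝ) : ℂ) - 1)‖
      ≤ thetaR ‖u‖⁻¹ q * q ^ (p : ℝ) / (1 - q) * ∑' j : ℤ, q ^ ((j : ℝ) ^ 2 / 4) := by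
  have h1q : 0 < 1 - q := sub_pos.2 hq1
  have hθ : 0 ≤ thetaR ‖u‖⁻¹ q := thetaR_nonneg (by positivity) hq0.le
  refine norm_tsum_le_mul_tsum_of_injective (summable_rpow_sq_div hq0 hq1 four_pos)
    (fun j ↦ by positivity) (e := fun k : ℕ ↦ (k : ℤ) - p) (fun a b h ↦ by simpa using h)
    (by positivity) fun k ↦ ?_
  have htail :
      1 - qPochInf (q ^ (k + 1)) q ≤ q ^ (p : ℝ) * q ^ (((k - p : ℤ) : ℝ) + 1) / (1 - q) := by
    rw [← Real.rpow_add hq0]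
    convert one_sub_qPochInf_le (pow_nonneg hq0.le (k + 1)) (pow_le_one₀ hq0.le hq1.le) hq0.le hq1
      using 2
    rw [← Real.rpow_natCast]
    push_cast
    ring_nf
  calc ‖thetaTerm q c u (k - p) * (((qPochInf (q ^ (k + 1)) q : ℝ) : ℂ) - 1)‖
      ≤ ‖thetaTerm q c u (k - p)‖ * (q ^ (p : ℝ) * q ^ (((k - p : ℤ) : ℝ) + 1) / (1 - q)) := by
        rw [norm_mul]
        gcongr
        exact (norm_qPochInf_pow_sub_one_le hq0 hq1 k).trans htail
    _ = q ^ (p : ℝ) / (1 - q) * (‖thetaTerm q c u (k - p)‖ * q ^ (((k - p : ℤ) : ℝ) + 1)) := by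
        ring
    _ ≤ q ^ (p : ℝ) / (1 - q) * (thetaR ‖u‖⁻¹ q * q ^ (((k - p : ℤ) : ℝ) ^ 2 / 4)) := by
        exact mul_le_mul_of_nonneg_left (norm_thetaTerm_mul_rpow_le hq0 hq1 hu hc0 hc2 _)
          (by positivity)
    _ = _ := by ring

lemma norm_tsum_thetaTerm_neg_le (hc0 : 0 ≤ c) {s p : ℤ} (hs : 0 ≤ s) (hsp : s ≤ p + 1) :
    ‖∑' k : ℕ, thetaTerm q c u (-(k + 1) - p)‖
      ≤ thetaR ‖u‖⁻¹ q * q ^ ((s : ℝ) ^ 2) / ‖u‖ ^ s * ∑' j : ℤ, q ^ ((j : ℝ) ^ 2 / 4) := by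
  have hθ : 0 ≤ thetaR ‖u‖⁻¹ q := thetaR_nonneg (by positivity) hq0.le
  exact norm_tsum_le_mul_tsum_of_injective (summable_rpow_sq_div hq0 hq1 four_pos)
    (fun j ↦ by positivity) (e := fun k : ℕ ↦ -((k : ℤ) + 1) - p + s)
    (fun a b h ↦ by simpa using h) (by positivity)
    fun k ↦ norm_thetaTerm_le_of_le_neg hq0 hq1 hu hc0 hs (by omega)

lemma norm_remainder_le (hc0 : 0 ≤ c) (hc2 : c ≤ 2) {s p : ℤ} (hs : 0 ≤ s) (hsp : s ≤ p + 1) :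
    ‖∑' k : ℕ, thetaTerm q c u (k - p) * (((qPochInf (q ^ (k + 1)) q : ℝ) : ℂ) - 1)
        - ∑' k : ℕ, thetaTerm q c u (-(k + 1) - p)‖
      ≤ thetaR ‖u‖⁻¹ q / (1 - q) * (q ^ (p : ℝ) * ∑' j : ℤ, q ^ ((j : ℝ) ^ 2 / 4))
        + thetaR ‖u‖⁻¹ q * (q ^ ((s : ℝ) ^ 2) * ∑' j : ℤ, q ^ ((j : ℝ) ^ 2 / 4)) / ‖u‖ ^ s := by
  refine (norm_sub_le _ _).trans ((add_le_add
    (norm_tsum_thetaTerm_mul_sub_one_le hq0 hq1 hu hc0 hc2 p)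
    (norm_tsum_thetaTerm_neg_le hq0 hq1 hu hc0 hs hsp)).trans_eq ?_)
  ring

end RemainderBounds

lemma rpow_mul_le_rpow_of_rpow_mul_le_one {q K a b e : ℝ} (hq0 : 0 < q) (hq1 : q ≤ 1)
    (hK : 0 ≤ K) (he : e ≤ a - b) (hqK : q ^ e * K ≤ 1) : q ^ a * K ≤ q ^ b := by
  calc q ^ a * K = q ^ (a - b) * K * q ^ b := by
        rw [mul_right_comm, ← Real.rpow_add hq0, sub_add_cancel]
    _ ≤ q ^ e * K * q ^ b := by
        gcongr ?_ * _ * _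
        exact Real.rpow_le_rpow_of_exponent_ge hq0 hq1 he
    _ ≤ q ^ b := mul_le_of_le_one_left (by positivity) hqK

lemma floor_intCast_div_natCast {k : Type*} [Field k] [LinearOrder k] [IsOrderedRing k]
    [FloorRing k] (m : ℤ) (n : ℕ) : ⌊(m : k) / n⌋ = m / n := by
  rw [Int.floor_div_natCast, Int.floor_intCast]

lemma eventually_rpow_div_mul_le_one {q : ℝ} (hq0 : 0 < q) (hq1 : q < 1) {d : ℝ} (hd : 0 < d)
    (K : ℝ) : ∀ᶠ m : ℤ in atTop, q ^ ((m : ℝ) / d) * K ≤ 1 := by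
  have hlim : Tendsto (fun m : ℤ ↦ q ^ ((m : ℝ) / d) * K) atTop (𝓝 0) := by
    simpa using ((tendsto_rpow_atTop_of_base_lt_one q (by linarith) hq1).comp
      (tendsto_intCast_atTop_atTop.atTop_div_const hd)).mul_const K
  exact hlim.eventually (eventually_le_nhds one_pos)

lemma norm_remainder_le_of_large {q c : ℝ} (hq0 : 0 < q) (hq1 : q < 1) {u : ℂ} (hu : u ≠ 0)
    (hc0 : 0 ≤ c) (hc2 : c ≤ 2) {m : ℤ} (hm4 : 4 ≤ m)
    (hmK : q ^ ((m : ℝ) / 8) * ∑' j : ℤ, q ^ ((j : ℝ) ^ 2 / 4) ≤ 1) :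
    ‖∑' k : ℕ, thetaTerm q c u (k - ⌊(m : ℝ) / 2⌋)
          * (((qPochInf (q ^ (k + 1)) q : ℝ) : ℂ) - 1)
        - ∑' k : ℕ, thetaTerm q c u (-(k + 1) - ⌊(m : ℝ) / 2⌋)‖
      ≤ 3 * qPochInf (-(q ^ 3)) q * thetaR ‖u‖⁻¹ q / (1 - q)
          * (q ^ ((m : ℝ) / 4) + q ^ ((m : ℝ) ^ 2 / 16) / ‖u‖ ^ (⌊(m : ℝ) / 4⌋ + 1)) := by
  set K := ∑' j : ℤ, q ^ ((j : ℝ) ^ 2 / 4)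
  have hK : 0 ≤ K := tsum_nonneg fun j ↦ by positivity
  have hp := floor_intCast_div_natCast (k := ℝ) m 2
  have hQ := floor_intCast_div_natCast (k := ℝ) m 4
  push_cast at hp hQ
  set p := ⌊(m : ℝ) / 2⌋
  set s := ⌊(m : ℝ) / 4⌋ + 1
  have hmr : (4 : ℝ) ≤ m := by exact_mod_cast hm4
  have hpr : (m : ℝ) ≤ 2 * p + 1 := by exact_mod_cast (by omega : m ≤ 2 * p + 1)
  have hsr : (m : ℝ) + 1 ≤ 4 * s := by exact_mod_cast (by omega : m + 1 ≤ 4 * s)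
  have hqA : q ^ (p : ℝ) * K ≤ q ^ ((m : ℝ) / 4) :=
    rpow_mul_le_rpow_of_rpow_mul_le_one hq0 hq1.le hK (by linarith) hmK
  have hqB : q ^ ((s : ℝ) ^ 2) * K ≤ q ^ ((m : ℝ) ^ 2 / 16) :=
    rpow_mul_le_rpow_of_rpow_mul_le_one hq0 hq1.le hK (by nlinarith) hmK
  set θ := thetaR ‖u‖⁻¹ q
  have hθ : 0 ≤ θ := thetaR_nonneg (by positivity) hq0.le
  have hθD : θ ≤ θ / (1 - q) := le_div_self hθ (by linarith) (by linarith)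
  have hP : 1 ≤ 3 * qPochInf (-(q ^ 3)) q := by
    linarith [one_le_qPochInf_neg (pow_nonneg hq0.le 3) hq0.le]
  set X := q ^ ((m : ℝ) / 4)
  set Y := q ^ ((m : ℝ) ^ 2 / 16) / ‖u‖ ^ s
  calc _ ≤ θ / (1 - q) * (q ^ (p : ℝ) * K) + θ * (q ^ ((s : ℝ) ^ 2) * K) / ‖u‖ ^ s :=
        norm_remainder_le hq0 hq1 hu hc0 hc2 (by omega) (by omega)
    _ ≤ θ / (1 - q) * X + θ / (1 - q) * Y := by
        rw [mul_div_assoc]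
        gcongr
        exact div_le_div_of_nonneg_right hqB (by positivity)
    _ ≤ 3 * qPochInf (-(q ^ 3)) q * (θ / (1 - q) * (X + Y)) := by
        rw [← mul_add]
        exact le_mul_of_one_le_left (by positivity) hP
    _ = _ := by ring

lemma chi_add_eq_sub_two_mul_floor (m : ℤ) (lam : ℝ) :
    (chi m : ℝ) + lam = (m + lam) - 2 * ⌊(m : ℝ) / 2⌋ := by
  have hp := floor_intCast_div_natCast (k := ℝ) m 2
  push_cast at hp
  have hm : m = 2 * ⌊(m : ℝ) / 2⌋ + chi m := by rw [chi, hp]; omega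
  have hmr : (m : ℝ) = 2 * ⌊(m : ℝ) / 2⌋ + chi m := by exact_mod_cast hm
  linarith

lemma eventually_exists_remainder {q : ℝ} (hq0 : 0 < q) (hq1 : q < 1) {u : ℂ} (hu : u ≠ 0)
    {lam : ℝ} (hlam : lam ∈ Set.Ico (0 : ℝ) 1) :
    ∀ᶠ m : ℤ in atTop, ∀ x : ℝ, x = m + lam → ∃ r : ℂ,
      ((qPochInf q q : ℝ) : ℂ) * ((q ^ ((⌊(m : ℝ) / 2⌋ : ℝ) * (x - (⌊(m : ℝ) / 2⌋ : ℝ))) : ℝ) : ℂ)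
          * Aq q (((q ^ (-x) : ℝ) : ℂ) * u)
        = (-u) ^ ⌊(m : ℝ) / 2⌋ * (thetaC (-(u⁻¹ * ((q ^ ((chi m : ℝ) + lam) : ℝ) : ℂ))) (q ^ 2) + r)
      ∧ ‖r‖ ≤ 3 * qPochInf (-(q ^ 3)) q * thetaR ‖u‖⁻¹ q / (1 - q)
          * (q ^ ((m : ℝ) / 4) + q ^ ((m : ℝ) ^ 2 / 16) / ‖u‖ ^ (⌊(m : ℝ) / 4⌋ + 1)) := by
  filter_upwards [eventually_ge_atTop 4, eventually_rpow_div_mul_le_one hq0 hq1 (d := 8)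
    (by norm_num) (∑' j : ℤ, q ^ ((j : ℝ) ^ 2 / 4))] with m hm4 hmK x hx
  have hchi : (0 : ℝ) ≤ chi m ∧ (chi m : ℝ) ≤ 1 := by
    constructor <;> norm_cast <;> rw [chi] <;> omega
  have hc := chi_add_eq_sub_two_mul_floor m lam
  rw [← hx] at hc
  rw [hc]
  exact ⟨_, qPochInf_mul_Aq_eq_thetaC_add hq0 hq1 hu x _, norm_remainder_le_of_large hq0 hq1 hu
    (by linarith [hlam.1]) (by linarith [hlam.2]) hm4 hmK⟩

theorem stmt2_general (q : ℝ) (hq0 : 0 < q) (hq1 : q < 1) (u : ℂ) (hu : u ≠ 0)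
    (t : ℚ) (ht : 0 < t) (lam : ℝ) (hlam : lam ∈ Set.Ico (0 : ℝ) 1) :
    ∃ N : ℕ, ∀ n : ℕ, N ≤ n → Int.fract ((n : ℝ) * (t : ℝ)) = lam →
      ∀ m : ℤ, m = ⌊(n : ℝ) * (t : ℝ)⌋ →
        ∃ r : ℂ,
          ((qPochInf q q : ℝ) : ℂ)
              * ((q ^ ((⌊(m : ℝ) / 2⌋ : ℝ) * ((n : ℝ) * (t : ℝ) - (⌊(m : ℝ) / 2⌋ : ℝ))) : ℝ) : ℂ)
              * Aq q (((q ^ (-((n : ℝ) * (t : ℝ))) : ℝ) : ℂ) * u)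
            = (-u) ^ ⌊(m : ℝ) / 2⌋
              * (thetaC (-(u⁻¹ * ((q ^ ((chi m : ℝ) + lam) : ℝ) : ℂ))) (q ^ 2) + r)
          ∧ ‖r‖ ≤
              3 * qPochInf (-(q ^ 3)) q * thetaR ‖u‖⁻¹ q / (1 - q)
                * (q ^ ((m : ℝ) / 4)
                  + q ^ ((m : ℝ) ^ 2 / 16) / ‖u‖ ^ (⌊(m : ℝ) / 4⌋ + 1)) := by
  have hfloor : Tendsto (fun n : ℕ ↦ ⌊(n : ℝ) * (t : ℝ)⌋) atTop atTop :=
    tendsto_floor_atTop.comp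
      (tendsto_natCast_atTop_atTop.atTop_mul_const (by exact_mod_cast ht))
  obtain ⟨N, hN⟩ :=
    eventually_atTop.1 (hfloor.eventually (eventually_exists_remainder hq0 hq1 hu hlam))
  refine ⟨N, fun n hn hfract m hm ↦ ?_⟩
  subst hm
  exact hN n hn _ (by rw [← hfract, Int.floor_add_fract])

theorem stmt2 (q : ℝ) (hq0 : 0 < q) (hq1 : q < 1) (u : ℂ) (hu : u ≠ 0)
    (t : ℚ) (ht : 0 < t) (lam : ℝ) (hlam : lam ∈ Set.Ico (0 : ℝ) 1)
    (hex : ∃ n₀ : ℕ, 0 < n₀ ∧ lam = Int.fract ((n₀ : ℝ) * (t : ℝ))) :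
    ∃ N : ℕ, ∀ n : ℕ, N ≤ n → Int.fract ((n : ℝ) * (t : ℝ)) = lam →
      ∀ m : ℤ, m = ⌊(n : ℝ) * (t : ℝ)⌋ →
        ∃ r : ℂ,
          ((qPochInf q q : ℝ) : ℂ)
              * ((q ^ ((⌊(m : ℝ) / 2⌋ : ℝ) * ((n : ℝ) * (t : ℝ) - (⌊(m : ℝ) / 2⌋ : ℝ))) : ℝ) : ℂ)
              * Aq q (((q ^ (-((n : ℝ) * (t : ℝ))) : ℝ) : ℂ) * u)
            = (-u) ^ ⌊(m : ℝ) / 2⌋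
              * (thetaC (-(u⁻¹ * ((q ^ ((chi m : ℝ) + lam) : ℝ) : ℂ))) (q ^ 2) + r)
          ∧ ‖r‖ ≤
              3 * qPochInf (-(q ^ 3)) q * thetaR ‖u‖⁻¹ q / (1 - q)
                * (q ^ ((m : ℝ) / 4)
                  + q ^ ((m : ℝ) ^ 2 / 16) / ‖u‖ ^ (⌊(m : ℝ) / 4⌋ + 1)) :=
  stmt2_general q hq0 hq1 u hu t ht lam hlam
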